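/- (Easy case of Theorem 2, Rendl–Wolkowicz) Suppose a is not orthogonal to the eigenspace of λmin(A) (the easy case). Then for every t ∈ ℝ, every nonzero eigenvector y(t) of D(t) corresponding to λmin(D(t)) has nonzero first component y0(t) ≠ 0. -/

import Mathlib

open Matrix

/-- The smallest eigenvalue of a real (symmetric) matrix. -/
noncomputable def lambdaMin {ι : Type} [Fintype ι] (M : Matrix ι ι ℝ) : ℝ :=
  sInf {μ : ℝ | ∃ v : ι → ℝ, v ≠ 0 ∧ M.mulVec v = μ • v}

/-- The multiplicity of the smallest eigenvalue: the dimension of Null(M - λmin(M)·I). -/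
noncomputable def eigMult {ι : Type} [Fintype ι] [DecidableEq ι] (M : Matrix ι ι ℝ) : ℕ :=
  Module.finrank ℝ (LinearMap.ker (M - lambdaMin M • (1 : Matrix ι ι ℝ)).mulVecLin)

/-- The bordered matrix D(t) = [[t, -aᵀ],[-a, A]]. -/
noncomputable def borderD {n : ℕ} (A : Matrix (Fin n) (Fin n) ℝ) (a : Fin n → ℝ) (t : ℝ) :
    Matrix (Unit ⊕ Fin n) (Unit ⊕ Fin n) ℝ :=
  Matrix.fromBlocks (Matrix.of fun (_ : Unit) (_ : Unit) => t)
    (Matrix.of fun (_ : Unit) (j : Fin n) => -a j)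
    (Matrix.of fun (i : Fin n) (_ : Unit) => -a i) A

/-- The bordered matrix D(t,λ) = [[t, (-a + (λ/2)b)ᵀ],[-a + (λ/2)b, A]]. -/
noncomputable def borderD2 {n : ℕ} (A : Matrix (Fin n) (Fin n) ℝ) (a b : Fin n → ℝ)
    (t l : ℝ) : Matrix (Unit ⊕ Fin n) (Unit ⊕ Fin n) ℝ :=
  borderD A (fun j => a j - (l / 2) * b j) t

/-- The objective xᵀAx - 2aᵀx. -/
noncomputable def objQ {n : ℕ} (A : Matrix (Fin n) (Fin n) ℝ) (a : Fin n → ℝ)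
    (x : Fin n → ℝ) : ℝ :=
  x ⬝ᵥ A.mulVec x - 2 * (a ⬝ᵥ x)

/-- The optimal value p* of eTRS. -/
noncomputable def pstar {n : ℕ} (A : Matrix (Fin n) (Fin n) ℝ) (a b : Fin n → ℝ)
    (c Δ : ℝ) : ℝ :=
  sInf {v : ℝ | ∃ x : Fin n → ℝ, x ⬝ᵥ x ≤ Δ ∧ b ⬝ᵥ x ≤ c ∧ v = objQ A a x}

/-- The Lagrangian of eTRS. -/
noncomputable def lagr {n : ℕ} (A : Matrix (Fin n) (Fin n) ℝ) (a b : Fin n → ℝ)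
    (c Δ : ℝ) (x : Fin n → ℝ) (l1 l2 : ℝ) : ℝ :=
  objQ A a x + l1 * (x ⬝ᵥ x - Δ) + l2 * (b ⬝ᵥ x - c)

/-- The Lagrangian dual value d* of eTRS:
the supremum over λ1, λ2 ≥ 0 of inf_x of the Lagrangian, encoded as the supremum of all
values that are lower bounds of the Lagrangian for some admissible multipliers. -/
noncomputable def dstar {n : ℕ} (A : Matrix (Fin n) (Fin n) ℝ) (a b : Fin n → ℝ)
    (c Δ : ℝ) : ℝ :=
  sSup {v : ℝ | ∃ l1 l2 : ℝ, 0 ≤ l1 ∧ 0 ≤ l2 ∧ ∀ x : Fin n → ℝ, v ≤ lagr A a b c Δ x l1 l2}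

/-- x is a global optimal solution of eTRS. -/
def isOptimal {n : ℕ} (A : Matrix (Fin n) (Fin n) ℝ) (a b : Fin n → ℝ)
    (c Δ : ℝ) (x : Fin n → ℝ) : Prop :=
  x ⬝ᵥ x ≤ Δ ∧ b ⬝ᵥ x ≤ c ∧
    ∀ y : Fin n → ℝ, y ⬝ᵥ y ≤ Δ → b ⬝ᵥ y ≤ c → objQ A a x ≤ objQ A a y

/-- The dual objective k(t,λ) = (Δ+1)·λmin(D(t,λ)) - t - λc. -/
noncomputable def ktl {n : ℕ} (A : Matrix (Fin n) (Fin n) ℝ) (a b : Fin n → ℝ)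
    (c Δ : ℝ) (t l : ℝ) : ℝ :=
  (Δ + 1) * lambdaMin (borderD2 A a b t l) - t - l * c

/-! If `y₀ = 0`, the tail `z` of `y` is an eigenvector of `A` for `λmin(D(t))`, so
`λmin(A) ≤ λmin(D(t))`. In the easy case the border strictly lowers the smallest eigenvalue:
with `v` a `λmin(A)`-eigenvector and `K = aᵀv ≠ 0`, the Rayleigh quotient of `D(t)` at
`(εK, v)` is below `λmin(A)` for small `ε > 0`, because the cross term `-2εK²` dominates the
`O(ε²)` term. -/

open Module.End in
theorem Matrix.mem_spectrum_iff_exists_mulVec_eq_smul {ι K : Type*} [Fintype ι] [DecidableEq ι]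
    [Field K] {M : Matrix ι ι K} {μ : K} :
    μ ∈ spectrum K M ↔ ∃ v : ι → K, v ≠ 0 ∧ M *ᵥ v = μ • v := by
  rw [← spectrum_toLin', ← hasEigenvalue_iff_mem_spectrum]
  constructor
  · intro h
    obtain ⟨v, hv, hv0⟩ := h.exists_hasEigenvector
    exact ⟨v, hv0, by simpa using mem_eigenspace_iff.1 hv⟩
  · rintro ⟨v, hv0, hv⟩
    exact hasEigenvalue_of_hasEigenvector ⟨mem_eigenspace_iff.2 (by simpa using hv), hv0⟩

section LambdaMin

variable {ι : Type} [Fintype ι] [DecidableEq ι]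

theorem lambdaMin_eq_sInf_spectrum (M : Matrix ι ι ℝ) : lambdaMin M = sInf (spectrum ℝ M) := by
  simp only [lambdaMin, ← mem_spectrum_iff_exists_mulVec_eq_smul, Set.ofPred_mem_eq]

theorem lambdaMin_le_of_mem_spectrum {M : Matrix ι ι ℝ} {μ : ℝ} (hμ : μ ∈ spectrum ℝ M) :
    lambdaMin M ≤ μ :=
  lambdaMin_eq_sInf_spectrum M ▸ csInf_le M.finite_spectrum.bddBelow hμ

theorem lambdaMin_le_of_mulVec_eq_smul {M : Matrix ι ι ℝ} {μ : ℝ} {v : ι → ℝ} (hv0 : v ≠ 0)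
    (hv : M *ᵥ v = μ • v) : lambdaMin M ≤ μ :=
  lambdaMin_le_of_mem_spectrum (mem_spectrum_iff_exists_mulVec_eq_smul.2 ⟨v, hv0, hv⟩)

theorem Matrix.IsHermitian.posSemidef_sub_lambdaMin {M : Matrix ι ι ℝ} (hM : M.IsHermitian) :
    (M - algebraMap ℝ _ (lambdaMin M)).PosSemidef := by
  refine posSemidef_iff_isHermitian_and_spectrum_nonneg.2 ⟨hM.sub (isHermitian_diagonal _), ?_⟩
  rw [← spectrum.sub_singleton_eq]
  rintro _ ⟨μ, hμ, c, rfl, rfl⟩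
  exact sub_nonneg.2 (lambdaMin_le_of_mem_spectrum hμ)

theorem Matrix.IsHermitian.lambdaMin_mul_dotProduct_self_le {M : Matrix ι ι ℝ}
    (hM : M.IsHermitian) (w : ι → ℝ) :
    lambdaMin M * (w ⬝ᵥ w) ≤ w ⬝ᵥ M *ᵥ w := by
  have := hM.posSemidef_sub_lambdaMin.dotProduct_mulVec_nonneg w
  simpa [sub_mulVec, Algebra.algebraMap_eq_smul_one, smul_mulVec, dotProduct_sub] using this

end LambdaMin

section Border

variable {n : ℕ} (A : Matrix (Fin n) (Fin n) ℝ) (a : Fin n → ℝ) (t : ℝ)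

theorem borderD_isHermitian {A : Matrix (Fin n) (Fin n) ℝ} (hA : A.IsHermitian) :
    (borderD A a t).IsHermitian :=
  IsHermitian.fromBlocks (by ext; simp) (by ext; simp) hA

theorem borderD_mulVec_inl (y : Unit ⊕ Fin n → ℝ) :
    (borderD A a t *ᵥ y) (Sum.inl ()) = t * y (Sum.inl ()) - a ⬝ᵥ (y ∘ Sum.inr) := by
  simp [borderD, Matrix.mulVec, dotProduct, Fintype.sum_sum_type, sub_eq_add_neg]

theorem borderD_mulVec_inr (y : Unit ⊕ Fin n → ℝ) (i : Fin n) :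
    (borderD A a t *ᵥ y) (Sum.inr i) = -a i * y (Sum.inl ()) + (A *ᵥ (y ∘ Sum.inr)) i := by
  simp [borderD, Matrix.mulVec, dotProduct, Fintype.sum_sum_type]

theorem dotProduct_eq_inl_mul_add_dotProduct_inr (y w : Unit ⊕ Fin n → ℝ) :
    y ⬝ᵥ w = y (Sum.inl ()) * w (Sum.inl ()) + (y ∘ Sum.inr) ⬝ᵥ (w ∘ Sum.inr) := by
  simp [dotProduct, Fintype.sum_sum_type]

theorem dotProduct_borderD_mulVec (y : Unit ⊕ Fin n → ℝ) :
    y ⬝ᵥ borderD A a t *ᵥ y = t * y (Sum.inl ()) ^ 2 - 2 * y (Sum.inl ()) * (a ⬝ᵥ (y ∘ Sum.inr))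
      + (y ∘ Sum.inr) ⬝ᵥ A *ᵥ (y ∘ Sum.inr) := by
  have htail : (borderD A a t *ᵥ y) ∘ Sum.inr = (-y (Sum.inl ())) • a + A *ᵥ (y ∘ Sum.inr) :=
    funext fun i => by simp [borderD_mulVec_inr, mul_comm]
  rw [dotProduct_eq_inl_mul_add_dotProduct_inr, borderD_mulVec_inl, htail, dotProduct_add,
    dotProduct_smul, dotProduct_comm _ a, smul_eq_mul]
  ring

end Border

theorem lambdaMin_borderD_lt_lambdaMin {n : ℕ} {A : Matrix (Fin n) (Fin n) ℝ}
    (hA : A.IsHermitian) {a v : Fin n → ℝ} (hv : A *ᵥ v = lambdaMin A • v) (hav : a ⬝ᵥ v ≠ 0)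
    (t : ℝ) : lambdaMin (borderD A a t) < lambdaMin A := by
  set K := a ⬝ᵥ v
  set ε := 1 / (|t - lambdaMin A| + 1)
  have hε : 0 < ε := by positivity
  have hεt : (t - lambdaMin A) * ε < 1 := by
    rw [mul_one_div, div_lt_one (by positivity)]
    linarith [le_abs_self (t - lambdaMin A)]
  set w : Unit ⊕ Fin n → ℝ := Sum.elim (fun _ => ε * K) v
  have hray := (borderD_isHermitian a t hA).lambdaMin_mul_dotProduct_self_le w
  rw [dotProduct_borderD_mulVec, dotProduct_eq_inl_mul_add_dotProduct_inr] at hray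
  simp only [w, Sum.elim_inl, Sum.elim_comp_inr, hv, dotProduct_smul, smul_eq_mul] at hray
  by_contra! hge
  have hvv : 0 ≤ v ⬝ᵥ v := Finset.sum_nonneg fun i _ => mul_self_nonneg (v i)
  have hK : 0 < K ^ 2 := by positivity
  nlinarith [mul_le_mul_of_nonneg_right hge (add_nonneg (mul_self_nonneg (ε * K)) hvv),
    mul_lt_mul_of_pos_right hεt (mul_pos hε hK), mul_pos hε hK]

theorem stmt2_general {n : ℕ} (A : Matrix (Fin n) (Fin n) ℝ) (hA : A.IsHermitian)
    (a : Fin n → ℝ)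
    (heasy : ∃ v : Fin n → ℝ, A.mulVec v = lambdaMin A • v ∧ a ⬝ᵥ v ≠ 0) :
    ∀ t : ℝ, ∀ y : Unit ⊕ Fin n → ℝ, y ≠ 0 →
      (borderD A a t).mulVec y = lambdaMin (borderD A a t) • y →
      y (Sum.inl ()) ≠ 0 := by
  intro t y hy0 heig hy
  obtain ⟨v, hv, hav⟩ := heasy
  have hz0 : y ∘ Sum.inr ≠ 0 := fun hz => hy0 <| funext <| by
    rintro (⟨⟩ | i)
    exacts [hy, congrFun hz i]
  have hAz : A *ᵥ (y ∘ Sum.inr) = lambdaMin (borderD A a t) • (y ∘ Sum.inr) :=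
    funext fun i => by simpa [borderD_mulVec_inr, hy] using congrFun heig (Sum.inr i)
  exact (lambdaMin_le_of_mulVec_eq_smul hz0 hAz).not_gt
    (lambdaMin_borderD_lt_lambdaMin hA hv hav t)

/-- Easy case of Theorem 2 (Rendl–Wolkowicz). -/
theorem stmt2 {n : ℕ} (hn : 1 ≤ n) (A : Matrix (Fin n) (Fin n) ℝ) (hA : A.IsHermitian)
    (a : Fin n → ℝ) (Δ : ℝ) (hΔ : 0 < Δ)
    (heasy : ∃ v : Fin n → ℝ, A.mulVec v = lambdaMin A • v ∧ a ⬝ᵥ v ≠ 0) :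
    ∀ t : ℝ, ∀ y : Unit ⊕ Fin n → ℝ, y ≠ 0 →
      (borderD A a t).mulVec y = lambdaMin (borderD A a t) • y →
      y (Sum.inl ()) ≠ 0 :=
  stmt2_general A hA a heasy
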